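/- For every j ∈ {1,2}, every real parameters a, c, and every Q ≠ P in ℝ², the divergence of the j-th column of the parameterized family satisfies ∑_{k=1}^{2} ∂H̃^{a,c}_{kj}(Q,P)/∂q_k = (2a + 32c + 1/2) R_j; in particular this column is divergence-free for all Q ≠ P if and only if a + 16c = −1/4. -/

import Mathlib

open Real

/-- Partial derivative of a scalar function on ℝ² with respect to the `l`-th coordinate. -/
noncomputable def pd2 (f : EuclideanSpace ℝ (Fin 2) → ℝ) (l : Fin 2)
    (Q : EuclideanSpace ℝ (Fin 2)) : ℝ :=
  fderiv ℝ f Q (EuclideanSpace.single l 1)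

/-- The parameterized 2D family
H̃^{a,c}_{kj}(Q,P) = δ_{kj} r² (a − (1/2) log r) + ∂²/∂q_k∂q_j [ r⁴ (c + (1/32) log r) ]. -/
noncomputable def Hac (P : EuclideanSpace ℝ (Fin 2)) (a c : ℝ) (k j : Fin 2)
    (Q : EuclideanSpace ℝ (Fin 2)) : ℝ :=
  (if k = j then (1 : ℝ) else 0) * ‖Q - P‖ ^ 2 * (a - (1 / 2) * Real.log ‖Q - P‖) +
    pd2 (fun Q' =>
      pd2 (fun Q'' => ‖Q'' - P‖ ^ 4 * (c + (1 / 32) * Real.log ‖Q'' - P‖)) j Q') k Q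

/-!
With `s = r²`, the biharmonic part is `f(s)` for `f(s) = s² (c + (1/64) log s)`, whose Hessian is
`2 f'(s) δ_kj + 4 f''(s) R_k R_j`. Hence, away from `P`, the `j`-th column is
`δ_kj A(s) + B(s) R_k R_j` with `A(s) = s (a + 4c + 1/32 - (3/16) log s)` and
`B(s) = 8c + 3/16 + (1/8) log s`. In the plane such a column has divergence
`(2 A'(s) + 2 s B'(s) + 3 B(s)) R_j`, in which the logarithms cancel, leaving `2a + 32c + 1/2`.
-/

open Filter Topology

theorem hasFDerivAt_comp_norm_sub_sq {E : Type*} [NormedAddCommGroup E] [InnerProductSpace ℝ E]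
    {g : ℝ → ℝ} {g' : ℝ} {p x : E} (hg : HasDerivAt g g' (‖x - p‖ ^ 2)) :
    HasFDerivAt (fun y => g (‖y - p‖ ^ 2)) ((2 * g') • innerSL ℝ (x - p)) x := by
  have hS : HasFDerivAt (fun y => ‖y - p‖ ^ 2) (2 • innerSL ℝ (x - p)) x := by
    simpa using ((hasFDerivAt_id x).sub_const p).norm_sq
  refine (hg.comp_hasFDerivAt x hS).congr_fderiv ?_
  ext v
  simp only [map_sub, smul_apply, sub_apply, coe_innerSL_apply, nsmul_eq_mul, Nat.cast_ofNat,
    smul_eq_mul]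
  ring

local notation "ℝ²" => EuclideanSpace ℝ (Fin 2)

section PartialDerivative

variable {f g : ℝ² → ℝ} {P Q : ℝ²} {l m : Fin 2}

theorem pd2_congr (h : f =ᶠ[𝓝 Q] g) : pd2 f l Q = pd2 g l Q := by
  rw [pd2, pd2, h.fderiv_eq]

theorem pd2_add (hf : DifferentiableAt ℝ f Q) (hg : DifferentiableAt ℝ g Q) :
    pd2 (fun x => f x + g x) l Q = pd2 f l Q + pd2 g l Q := by
  simp only [pd2, fderiv_fun_add hf hg, add_apply]

theorem pd2_mul (hf : DifferentiableAt ℝ f Q) (hg : DifferentiableAt ℝ g Q) :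
    pd2 (fun x => f x * g x) l Q = pd2 f l Q * g Q + f Q * pd2 g l Q := by
  rw [pd2, pd2, pd2, fderiv_fun_mul hf hg]
  simp only [add_apply, smul_apply, smul_eq_mul]
  ring

theorem pd2_sub_apply : pd2 (fun x => (x - P) m) l Q = if l = m then 1 else 0 := by
  have h : HasFDerivAt (fun x : ℝ² => (x - P) m) (EuclideanSpace.proj m : ℝ² →L[ℝ] ℝ) Q :=
    (EuclideanSpace.proj m : ℝ² →L[ℝ] ℝ).hasFDerivAt.comp Q ((hasFDerivAt_id Q).sub_const P)
  rw [pd2, h.fderiv]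
  simp [eq_comm]

theorem pd2_comp_norm_sub_sq {g : ℝ → ℝ} {g' : ℝ} (hg : HasDerivAt g g' (‖Q - P‖ ^ 2)) :
    pd2 (fun x => g (‖x - P‖ ^ 2)) l Q = 2 * g' * (Q - P) l := by
  simp [pd2, (hasFDerivAt_comp_norm_sub_sq hg).fderiv, EuclideanSpace.inner_single_right]

end PartialDerivative

section RadialCalculus

variable {P Q : ℝ²}

theorem pd2_pd2_comp_norm_sub_sq {f f' : ℝ → ℝ} {f'' : ℝ}
    (hf : ∀ t > 0, HasDerivAt f (f' t) t) (hf' : HasDerivAt f' f'' (‖Q - P‖ ^ 2))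
    (hQ : Q ≠ P) (j k : Fin 2) :
    pd2 (fun x => pd2 (fun y => f (‖y - P‖ ^ 2)) j x) k Q =
      2 * f' (‖Q - P‖ ^ 2) * (if k = j then 1 else 0) + 4 * f'' * (Q - P) k * (Q - P) j := by
  have hgrad : (fun x => pd2 (fun y => f (‖y - P‖ ^ 2)) j x) =ᶠ[𝓝 Q]
      fun x => 2 * f' (‖x - P‖ ^ 2) * (x - P) j :=
    (eventually_ne_nhds hQ).mono fun x hx =>
      pd2_comp_norm_sub_sq (hf _ (pow_pos (norm_pos_iff.mpr (sub_ne_zero.mpr hx)) 2))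
  have h2f' : HasDerivAt (fun t => 2 * f' t) (2 * f'') (‖Q - P‖ ^ 2) := hf'.const_mul 2
  rw [pd2_congr hgrad, pd2_mul (hasFDerivAt_comp_norm_sub_sq h2f').differentiableAt (by fun_prop),
    pd2_comp_norm_sub_sq h2f', pd2_sub_apply]
  ring

theorem sum_pd2_column {A B : ℝ → ℝ} {A' B' : ℝ} (hA : HasDerivAt A A' (‖Q - P‖ ^ 2))
    (hB : HasDerivAt B B' (‖Q - P‖ ^ 2)) (j : Fin 2) :
    ∑ k, pd2 (fun x => (if k = j then 1 else 0) * A (‖x - P‖ ^ 2) +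
        B (‖x - P‖ ^ 2) * (x - P) k * (x - P) j) k Q =
      (2 * A' + 2 * ‖Q - P‖ ^ 2 * B' + 3 * B (‖Q - P‖ ^ 2)) * (Q - P) j := by
  have hterm : ∀ k, pd2 (fun x => (if k = j then 1 else 0) * A (‖x - P‖ ^ 2) +
      B (‖x - P‖ ^ 2) * (x - P) k * (x - P) j) k Q =
      (if k = j then 1 else 0) * (2 * A' * (Q - P) k) + 2 * B' * (Q - P) k ^ 2 * (Q - P) j +
        B (‖Q - P‖ ^ 2) * (Q - P) j +
        B (‖Q - P‖ ^ 2) * (Q - P) k * (if k = j then 1 else 0) := by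
    intro k
    have hδA := hA.const_mul (if k = j then (1 : ℝ) else 0)
    have hBd := (hasFDerivAt_comp_norm_sub_sq hB).differentiableAt
    rw [pd2_add (hasFDerivAt_comp_norm_sub_sq hδA).differentiableAt
      ((hBd.fun_mul (by fun_prop)).fun_mul (by fun_prop)),
      pd2_comp_norm_sub_sq hδA, pd2_mul (hBd.fun_mul (by fun_prop)) (by fun_prop),
      pd2_mul hBd (by fun_prop),
      pd2_comp_norm_sub_sq hB, pd2_sub_apply, pd2_sub_apply]
    simp only [if_true]
    ring
  have hnorm : ‖Q - P‖ ^ 2 = (Q - P) 0 ^ 2 + (Q - P) 1 ^ 2 := by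
    simp [EuclideanSpace.norm_sq_eq, Fin.sum_univ_two]
  rw [Fin.sum_univ_two, hterm, hterm]
  fin_cases j <;> simp only [Fin.zero_eta, Fin.mk_one, Fin.isValue, reduceIte, Fin.reduceEq]
  · linear_combination (-2 * B' * (Q - P) 0) * hnorm
  · linear_combination (-2 * B' * (Q - P) 1) * hnorm

end RadialCalculus

section LogProfiles

variable {α β t : ℝ}

theorem hasDerivAt_mul_affine_log (ht : t ≠ 0) :
    HasDerivAt (fun t => t * (α + β * log t)) (α + β * log t + β) t := by
  refine ((hasDerivAt_id' t).fun_mul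
    (((hasDerivAt_log ht).const_mul β).const_add α)).congr_deriv ?_
  field_simp

theorem hasDerivAt_sq_mul_affine_log (ht : t ≠ 0) :
    HasDerivAt (fun t => t ^ 2 * (α + β * log t)) (t * (2 * α + β + 2 * β * log t)) t := by
  refine ((hasDerivAt_pow 2 t).fun_mul
    (((hasDerivAt_log ht).const_mul β).const_add α)).congr_deriv ?_
  field_simp
  ring

end LogProfiles

theorem Hac_eq_of_ne {P x : ℝ²} (a c : ℝ) (k j : Fin 2) (hx : x ≠ P) :
    Hac P a c k j x =
      (if k = j then 1 else 0) *
          (‖x - P‖ ^ 2 * (a + 4 * c + 1 / 32 + -(3 / 16) * log (‖x - P‖ ^ 2))) +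
        (8 * c + 3 / 16 + 1 / 8 * log (‖x - P‖ ^ 2)) * (x - P) k * (x - P) j := by
  have hs : ‖x - P‖ ^ 2 ≠ 0 := pow_ne_zero 2 (norm_ne_zero_iff.mpr (sub_ne_zero.mpr hx))
  have hψ : (fun y : ℝ² => ‖y - P‖ ^ 4 * (c + 1 / 32 * log ‖y - P‖)) =
      fun y => (‖y - P‖ ^ 2) ^ 2 * (c + 1 / 64 * log (‖y - P‖ ^ 2)) := by
    ext y
    rw [log_pow]
    ring
  rw [Hac, hψ, pd2_pd2_comp_norm_sub_sq (fun t ht => hasDerivAt_sq_mul_affine_log ht.ne')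
    (hasDerivAt_mul_affine_log hs) hx, log_pow]
  push_cast
  ring

theorem sum_pd2_Hac {P Q : ℝ²} (a c : ℝ) (j : Fin 2) (hQ : Q ≠ P) :
    ∑ k, pd2 (Hac P a c k j) k Q = (2 * a + 32 * c + 1 / 2) * (Q - P) j := by
  have hr : ‖Q - P‖ ≠ 0 := norm_ne_zero_iff.mpr (sub_ne_zero.mpr hQ)
  have hs : ‖Q - P‖ ^ 2 ≠ 0 := pow_ne_zero 2 hr
  have hA := hasDerivAt_mul_affine_log (α := a + 4 * c + 1 / 32) (β := -(3 / 16)) hs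
  have hB := ((hasDerivAt_log hs).const_mul (1 / 8)).const_add (8 * c + 3 / 16)
  calc ∑ k, pd2 (Hac P a c k j) k Q
      = ∑ k, pd2 (fun x => (if k = j then 1 else 0) *
          (‖x - P‖ ^ 2 * (a + 4 * c + 1 / 32 + -(3 / 16) * log (‖x - P‖ ^ 2))) +
          (8 * c + 3 / 16 + 1 / 8 * log (‖x - P‖ ^ 2)) * (x - P) k * (x - P) j) k Q :=
        Finset.sum_congr rfl fun k _ =>
          pd2_congr ((eventually_ne_nhds hQ).mono fun x hx => Hac_eq_of_ne a c k j hx)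
    _ = _ := sum_pd2_column hA hB j
    _ = (2 * a + 32 * c + 1 / 2) * (Q - P) j := by
        congr 1
        field_simp
        ring

theorem forall_ne_mul_sub_apply_eq_zero_iff {ι : Type*} [Fintype ι] [DecidableEq ι]
    {P : EuclideanSpace ℝ ι} {κ : ℝ} (j : ι) :
    (∀ Q, Q ≠ P → κ * (Q - P) j = 0) ↔ κ = 0 := by
  refine ⟨fun h => ?_, fun h Q _ => by rw [h, zero_mul]⟩
  have hQ : P + EuclideanSpace.single j 1 ≠ P := by simp
  simpa using h _ hQ

/-- The divergence of the j-th column of the parameterized family satisfies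
∑_k ∂H̃^{a,c}_{kj}/∂q_k = (2a + 32c + 1/2) R_j for all Q ≠ P; in particular the column
is divergence-free for all Q ≠ P if and only if a + 16c = −1/4. -/
theorem twoD_parameterized_divergence
    (P : EuclideanSpace ℝ (Fin 2)) (j : Fin 2) (a c : ℝ) :
    (∀ Q : EuclideanSpace ℝ (Fin 2), Q ≠ P →
      (∑ k : Fin 2, pd2 (Hac P a c k j) k Q) = (2 * a + 32 * c + 1 / 2) * (Q - P) j) ∧
    ((∀ Q : EuclideanSpace ℝ (Fin 2), Q ≠ P →
        (∑ k : Fin 2, pd2 (Hac P a c k j) k Q) = 0) ↔ a + 16 * c = -(1 / 4)) := by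
  have hdiv (Q : ℝ²) (hQ : Q ≠ P) := sum_pd2_Hac a c j hQ
  refine ⟨hdiv, ?_⟩
  calc (∀ Q : ℝ², Q ≠ P → ∑ k, pd2 (Hac P a c k j) k Q = 0)
      ↔ ∀ Q : ℝ², Q ≠ P → (2 * a + 32 * c + 1 / 2) * (Q - P) j = 0 :=
        forall₂_congr fun Q hQ => by rw [hdiv Q hQ]
    _ ↔ 2 * a + 32 * c + 1 / 2 = 0 := forall_ne_mul_sub_apply_eq_zero_iff j
    _ ↔ a + 16 * c = -(1 / 4) := by constructor <;> intro h <;> linarith
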